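/- Let ℓ, m ≥ 2 be integers, at least one of which is even. Then s(A) = 2, s(B) = 2−m, s(C) = 2−ℓ, and s(D) = 3−ℓ−m. Exactly one of A, B, C has all entries even, namely A if ℓ and m are both even, B if ℓ is odd, and C if m is odd; call it n₀ and set N_n = 2(s(n) − s(n₀)). Then (N_A, N_B, N_C, N_D) = (0, −2m, −2ℓ, 2(1−ℓ−m)) if ℓ and m are both even, (2m, 0, 2(m−ℓ), 2(1−ℓ)) if ℓ is odd, and (2ℓ, 2(ℓ−m), 0, 2(1−m)) if m is odd. -/
import Mathlib


/-- `n⁺`: the number of (0-based) indices `j` with `sign(n_j) = (−1)^j`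
(1-based: `sign(n_i) = (−1)^{i−1}`). -/
def nplus (L : List ℤ) : ℕ :=
  ((Finset.range L.length).filter (fun j => (L.getD j 0).sign = (-1) ^ j)).card

/-- `s(n) = n⁺ − n⁻` where `n⁻ = k − n⁺`. -/
def sval (L : List ℤ) : ℤ := 2 * (nplus L : ℤ) - L.length

/-- The expansion `A = [ℓ, −m]` of `J(ℓ,m)`. -/
def seqA (ℓ m : ℕ) : List ℤ := [(ℓ : ℤ), -(m : ℤ)]

/-- The expansion `B` of length `m`: `B_1 = ℓ−1`, `B_i = (−1)^i·2` for `2 ≤ i ≤ m`. -/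
def seqB (ℓ m : ℕ) : List ℤ :=
  List.ofFn (fun j : Fin m =>
    if (j : ℕ) = 0 then (ℓ : ℤ) - 1 else (-1) ^ ((j : ℕ) + 1) * 2)

/-- The expansion `C` of length `ℓ`: `C_i = (−1)^i·2` for `i ≤ ℓ−1`,
`C_ℓ = (−1)^{ℓ−1}·(m−1)`. -/
def seqC (ℓ m : ℕ) : List ℤ :=
  List.ofFn (fun j : Fin ℓ =>
    if (j : ℕ) = ℓ - 1 then (-1) ^ (ℓ - 1) * ((m : ℤ) - 1)
    else (-1) ^ ((j : ℕ) + 1) * 2)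

/-- The expansion `D` of length `ℓ+m−3`: `D_i = (−1)^i·2` for `i ≠ ℓ−1`,
`D_{ℓ−1} = (−1)^{ℓ−1}·3`. -/
def seqD (ℓ m : ℕ) : List ℤ :=
  List.ofFn (fun j : Fin (ℓ + m - 3) =>
    if (j : ℕ) = ℓ - 2 then (-1) ^ (ℓ - 1) * 3 else (-1) ^ ((j : ℕ) + 1) * 2)

/-- All entries of a sequence are even. -/
def allEven (L : List ℤ) : Prop := ∀ n ∈ L, Even n

lemma getD_ofFn {n : ℕ} (f : Fin n → ℤ) (j : ℕ) (h : j < n) :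
    (List.ofFn f).getD j 0 = f ⟨j, h⟩ := by
  rw [List.getD_eq_getElem _ _ (by simpa using h)]
  simp

lemma sign_npm (k : ℕ) (c : ℤ) (hc : 0 < c) : ((-1)^k * c).sign = (-1)^k := by
  rcases Nat.even_or_odd k with h | h
  · rw [h.neg_one_pow]; simpa using Int.sign_eq_one_of_pos hc
  · rw [h.neg_one_pow]; simp [Int.sign_eq_one_of_pos hc]

lemma pow_ne (j : ℕ) : ((-1:ℤ))^(j+1) ≠ (-1)^j := by
  rcases Nat.even_or_odd j with h | h
  · rw [h.neg_one_pow, h.add_one.neg_one_pow]; norm_num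
  · rw [h.neg_one_pow, h.add_one.neg_one_pow]; norm_num

lemma nplusA {ℓ m : ℕ} (hℓ : 2 ≤ ℓ) (hm : 2 ≤ m) : nplus (seqA ℓ m) = 2 := by
  unfold nplus seqA
  rw [show ([(ℓ:ℤ), -(m:ℤ)] : List ℤ).length = 2 from rfl]
  rw [Finset.filter_true_of_mem, Finset.card_range]
  intro j hj
  simp only [Finset.mem_range] at hj
  interval_cases j
  · simpa using Int.sign_eq_one_of_pos (show (0:ℤ) < ℓ by exact_mod_cast by omega)
  · have : (0:ℤ) < m := by exact_mod_cast by omega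
    simp [Int.sign_eq_one_of_pos this]

lemma nplusB {ℓ m : ℕ} (hℓ : 2 ≤ ℓ) (hm : 2 ≤ m) : nplus (seqB ℓ m) = 1 := by
  unfold nplus
  have hlen : (seqB ℓ m).length = m := by simp [seqB]
  rw [hlen]
  have key : (Finset.range m).filter (fun j => ((seqB ℓ m).getD j 0).sign = (-1)^j) = {0} := by
    ext j
    simp only [Finset.mem_filter, Finset.mem_range, Finset.mem_singleton]
    constructor
    · rintro ⟨hj, hp⟩
      by_contra hne
      rw [seqB, getD_ofFn _ j hj] at hp
      simp only [Fin.val_mk, if_neg hne] at hp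
      rw [sign_npm (j+1) 2 (by norm_num)] at hp
      exact pow_ne j hp
    · rintro rfl
      refine ⟨by omega, ?_⟩
      rw [seqB, getD_ofFn _ 0 (by omega)]
      simp only [Fin.val_mk, if_pos rfl, pow_zero]
      have h1 : (0:ℤ) < (ℓ:ℤ) - 1 := by omega
      exact Int.sign_eq_one_of_pos h1
  rw [key]; rfl

lemma nplusC {ℓ m : ℕ} (hℓ : 2 ≤ ℓ) (hm : 2 ≤ m) : nplus (seqC ℓ m) = 1 := by
  unfold nplus
  have hlen : (seqC ℓ m).length = ℓ := by simp [seqC]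
  rw [hlen]
  have key : (Finset.range ℓ).filter (fun j => ((seqC ℓ m).getD j 0).sign = (-1)^j) = {ℓ-1} := by
    ext j
    simp only [Finset.mem_filter, Finset.mem_range, Finset.mem_singleton]
    constructor
    · rintro ⟨hj, hp⟩
      by_contra hne
      rw [seqC, getD_ofFn _ j hj] at hp
      simp only [Fin.val_mk, if_neg hne] at hp
      rw [sign_npm (j+1) 2 (by norm_num)] at hp
      exact pow_ne j hp
    · rintro rfl
      refine ⟨by omega, ?_⟩
      rw [seqC, getD_ofFn _ (ℓ-1) (by omega)]
      simp only [Fin.val_mk, if_pos rfl]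
      exact sign_npm (ℓ-1) _ (by omega)
  rw [key]; rfl

lemma nplusD {ℓ m : ℕ} (hℓ : 2 ≤ ℓ) (hm : 2 ≤ m) : nplus (seqD ℓ m) = 0 := by
  unfold nplus
  rw [Finset.card_eq_zero, Finset.filter_eq_empty_iff]
  intro j hj
  have hlen : (seqD ℓ m).length = ℓ + m - 3 := by simp [seqD]
  rw [hlen] at hj
  simp only [Finset.mem_range] at hj
  rw [seqD, getD_ofFn _ j hj]
  simp only [Fin.val_mk]
  by_cases h : j = ℓ - 2
  · rw [if_pos h]
    rw [sign_npm (ℓ-1) 3 (by norm_num), show ℓ - 1 = (ℓ-2) + 1 by omega, h]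
    exact pow_ne (ℓ-2)
  · rw [if_neg h, sign_npm (j+1) 2 (by norm_num)]
    exact pow_ne j

lemma svalA {ℓ m : ℕ} (hℓ : 2 ≤ ℓ) (hm : 2 ≤ m) : sval (seqA ℓ m) = 2 := by
  unfold sval; rw [nplusA hℓ hm]; simp [seqA]

lemma svalB {ℓ m : ℕ} (hℓ : 2 ≤ ℓ) (hm : 2 ≤ m) : sval (seqB ℓ m) = 2 - m := by
  unfold sval; rw [nplusB hℓ hm]
  have : (seqB ℓ m).length = m := by simp [seqB]
  rw [this]; ring

lemma svalC {ℓ m : ℕ} (hℓ : 2 ≤ ℓ) (hm : 2 ≤ m) : sval (seqC ℓ m) = 2 - ℓ := by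
  unfold sval; rw [nplusC hℓ hm]
  have : (seqC ℓ m).length = ℓ := by simp [seqC]
  rw [this]; ring

lemma svalD {ℓ m : ℕ} (hℓ : 2 ≤ ℓ) (hm : 2 ≤ m) : sval (seqD ℓ m) = 3 - ℓ - m := by
  unfold sval; rw [nplusD hℓ hm]
  have : (seqD ℓ m).length = ℓ + m - 3 := by simp [seqD]
  rw [this]; push_cast [Nat.cast_sub (by omega : 3 ≤ ℓ + m)]; ring

lemma allEvenA_iff {ℓ m : ℕ} : allEven (seqA ℓ m) ↔ (Even ℓ ∧ Even m) := by
  simp [allEven, seqA, Int.even_coe_nat, and_comm]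

lemma allEvenB {ℓ m : ℕ} (h : Odd ℓ) : allEven (seqB ℓ m) := by
  intro a ha
  rw [seqB, List.mem_ofFn] at ha
  obtain ⟨i, rfl⟩ := ha
  by_cases hi : (i : ℕ) = 0
  · simp only [hi, if_pos rfl]
    obtain ⟨k, hk⟩ := h
    exact ⟨k, by push_cast [hk]; ring⟩
  · simp only [if_neg hi]
    exact ⟨(-1)^((i:ℕ)+1), by ring⟩

lemma not_allEvenB {ℓ m : ℕ} (hm : 2 ≤ m) (h : Even ℓ) : ¬ allEven (seqB ℓ m) := by
  intro hall
  have hmem : ((ℓ:ℤ) - 1) ∈ seqB ℓ m := by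
    rw [seqB, List.mem_ofFn]
    exact ⟨⟨0, by omega⟩, by simp⟩
  have := hall _ hmem
  obtain ⟨k, hk⟩ := this
  obtain ⟨k', hk'⟩ := h
  have : (ℓ:ℤ) = k' + k' := by exact_mod_cast congrArg (Nat.cast : ℕ → ℤ) hk'
  omega

lemma allEvenC {ℓ m : ℕ} (h : Odd m) : allEven (seqC ℓ m) := by
  intro a ha
  rw [seqC, List.mem_ofFn] at ha
  obtain ⟨i, rfl⟩ := ha
  by_cases hi : (i : ℕ) = ℓ - 1
  · simp only [hi, if_pos rfl]
    obtain ⟨k, hk⟩ := h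
    exact ⟨(-1)^(ℓ-1) * k, by push_cast [hk]; ring⟩
  · simp only [if_neg hi]
    exact ⟨(-1)^((i:ℕ)+1), by ring⟩

lemma not_allEvenC {ℓ m : ℕ} (hℓ : 2 ≤ ℓ) (h : Even m) : ¬ allEven (seqC ℓ m) := by
  intro hall
  have hmem : ((-1:ℤ))^(ℓ-1) * ((m:ℤ) - 1) ∈ seqC ℓ m := by
    rw [seqC, List.mem_ofFn]
    exact ⟨⟨ℓ-1, by omega⟩, by simp⟩
  have he := hall _ hmem
  have : Even ((m:ℤ) - 1) := by
    rcases Nat.even_or_odd (ℓ-1) with hp | hp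
    · rwa [hp.neg_one_pow, one_mul] at he
    · rw [hp.neg_one_pow, neg_one_mul] at he
      simpa using he.neg
  obtain ⟨k, hk⟩ := this
  obtain ⟨k', hk'⟩ := h
  have : (m:ℤ) = k' + k' := by exact_mod_cast congrArg (Nat.cast : ℕ → ℤ) hk'
  omega

lemma not_allEvenA_l {ℓ m : ℕ} (h : Odd ℓ) : ¬ allEven (seqA ℓ m) := by
  rw [allEvenA_iff]; rintro ⟨h1, -⟩; exact (Nat.not_even_iff_odd.mpr h) h1

lemma not_allEvenA_m {ℓ m : ℕ} (h : Odd m) : ¬ allEven (seqA ℓ m) := by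
  rw [allEvenA_iff]; rintro ⟨-, h2⟩; exact (Nat.not_even_iff_odd.mpr h) h2

/-- For `J(ℓ,m)` with `ℓ, m ≥ 2` and at least one of `ℓ, m` even:
`s(A) = 2`, `s(B) = 2−m`, `s(C) = 2−ℓ`, `s(D) = 3−ℓ−m`; exactly one of `A, B, C` is
the even (Seifert) expansion `n₀` according to the parities, and with
`N_n = 2(s(n) − s(n₀))` the boundary slopes `(N_A, N_B, N_C, N_D)` take the stated
values. -/
theorem slopes_J_ell_m (ℓ m : ℕ) (hℓ : 2 ≤ ℓ) (hm : 2 ≤ m)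
    (hpar : Even ℓ ∨ Even m) :
    sval (seqA ℓ m) = 2 ∧ sval (seqB ℓ m) = 2 - (m : ℤ) ∧
    sval (seqC ℓ m) = 2 - (ℓ : ℤ) ∧ sval (seqD ℓ m) = 3 - (ℓ : ℤ) - (m : ℤ) ∧
    ((Even ℓ ∧ Even m) →
      allEven (seqA ℓ m) ∧ ¬allEven (seqB ℓ m) ∧ ¬allEven (seqC ℓ m) ∧
      2 * (sval (seqA ℓ m) - sval (seqA ℓ m)) = 0 ∧
      2 * (sval (seqB ℓ m) - sval (seqA ℓ m)) = -2 * (m : ℤ) ∧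
      2 * (sval (seqC ℓ m) - sval (seqA ℓ m)) = -2 * (ℓ : ℤ) ∧
      2 * (sval (seqD ℓ m) - sval (seqA ℓ m)) = 2 * (1 - (ℓ : ℤ) - (m : ℤ))) ∧
    (Odd ℓ →
      ¬allEven (seqA ℓ m) ∧ allEven (seqB ℓ m) ∧ ¬allEven (seqC ℓ m) ∧
      2 * (sval (seqA ℓ m) - sval (seqB ℓ m)) = 2 * (m : ℤ) ∧
      2 * (sval (seqB ℓ m) - sval (seqB ℓ m)) = 0 ∧
      2 * (sval (seqC ℓ m) - sval (seqB ℓ m)) = 2 * ((m : ℤ) - (ℓ : ℤ)) ∧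
      2 * (sval (seqD ℓ m) - sval (seqB ℓ m)) = 2 * (1 - (ℓ : ℤ))) ∧
    (Odd m →
      ¬allEven (seqA ℓ m) ∧ ¬allEven (seqB ℓ m) ∧ allEven (seqC ℓ m) ∧
      2 * (sval (seqA ℓ m) - sval (seqC ℓ m)) = 2 * (ℓ : ℤ) ∧
      2 * (sval (seqB ℓ m) - sval (seqC ℓ m)) = 2 * ((ℓ : ℤ) - (m : ℤ)) ∧
      2 * (sval (seqC ℓ m) - sval (seqC ℓ m)) = 0 ∧
      2 * (sval (seqD ℓ m) - sval (seqC ℓ m)) = 2 * (1 - (m : ℤ))) := by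
  have sA := svalA hℓ hm
  have sB := svalB hℓ hm
  have sC := svalC hℓ hm
  have sD := svalD hℓ hm
  refine ⟨sA, sB, sC, sD, ?_, ?_, ?_⟩
  · rintro ⟨he, hme⟩
    exact ⟨allEvenA_iff.mpr ⟨he, hme⟩, not_allEvenB hm he, not_allEvenC hℓ hme,
      by rw [sA]; ring, by rw [sB, sA]; ring, by rw [sC, sA]; ring, by rw [sD, sA]; ring⟩
  · intro ho
    have hme : Even m := hpar.resolve_left (Nat.not_even_iff_odd.mpr ho)
    exact ⟨not_allEvenA_l ho, allEvenB ho, not_allEvenC hℓ hme,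
      by rw [sA, sB]; ring, by rw [sB]; ring, by rw [sC, sB]; ring, by rw [sD, sB]; ring⟩
  · intro ho
    have hle : Even ℓ := hpar.resolve_right (Nat.not_even_iff_odd.mpr ho)
    exact ⟨not_allEvenA_m ho, not_allEvenB hm hle, allEvenC ho,
      by rw [sA, sC]; ring, by rw [sB, sC]; ring, by rw [sC]; ring, by rw [sD, sC]; ring⟩
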